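/- Let ν ∈ (−1, 1/2) with ν ≠ 0, let m and n be distinct positive integers, and let c_m, c_n be nonzero real numbers. Define w(x) = c_m·sin(m·π·x) + c_n·sin(n·π·x) and define the load p(x) = (1/(12(1−ν²)))·w⁗(x). Then w solves the Kirchhoff–Love strip equation with Poisson ratio ν and load p, but w does NOT solve the PGD limit strip equation with Poisson ratio ν and load p; i.e., there exists x ∈ [0,1] at which the PGD limit strip equation fails. -/

import Mathlib

open Real

/-- `D n w` is the `n`-th derivative of `w` on the interval `[0,1]`. -/
noncomputable def D (n : ℕ) (w : ℝ → ℝ) : ℝ → ℝ :=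
  iteratedDerivWithin n w (Set.Icc (0 : ℝ) 1)

/-- The Rayleigh-type quotient `κ(w) = (∫₀¹ w w'') / (∫₀¹ w²)`. -/
noncomputable def kappa (w : ℝ → ℝ) : ℝ :=
  (∫ x in (0:ℝ)..1, w x * D 2 w x) / (∫ x in (0:ℝ)..1, (w x) ^ 2)

/-- The Kirchhoff–Love strip equation with Poisson ratio `ν` and load `p`. -/
def KLeq (ν : ℝ) (w p : ℝ → ℝ) : Prop :=
  ∀ x ∈ Set.Icc (0 : ℝ) 1, (1 / (12 * (1 - ν ^ 2))) * D 4 w x = p x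

/-! The PGD operator is the Kirchhoff–Love operator plus `B (∂⁴ - 2κ∂² + κ²)` with
`B = ν² / (12 (1 - ν²) (1 - 2ν)) ≠ 0`, and this extra term multiplies the mode `sin (kπx)` by
`B ((kπ)² + κ)²`. So if the PGD equation held with the Kirchhoff–Love load, both modes of `w`
would be annihilated, which forces `(mπ)² = -κ = (nπ)²`, i.e. `m = n`. -/

open Set

theorem iteratedDeriv_even_sin_mul (k : ℕ) (c : ℝ) :
    iteratedDeriv (2 * k) (fun x => sin (c * x))
      = fun x => (-1) ^ k * c ^ (2 * k) * sin (c * x) := by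
  rw [iteratedDeriv_comp_const_mul contDiff_sin, iteratedDeriv_even_sin]
  ext x
  simp only [Pi.mul_apply, Pi.pow_apply, Pi.neg_apply, Pi.one_apply]
  ring

theorem iteratedDeriv_even_two_sines (k : ℕ) (a b c d x : ℝ) :
    iteratedDeriv (2 * k) (fun x => a * sin (c * x) + b * sin (d * x)) x
      = (-1) ^ k * (a * c ^ (2 * k) * sin (c * x) + b * d ^ (2 * k) * sin (d * x)) := by
  rw [iteratedDeriv_fun_add (by fun_prop) (by fun_prop), iteratedDeriv_const_mul_field,
    iteratedDeriv_const_mul_field, iteratedDeriv_even_sin_mul, iteratedDeriv_even_sin_mul]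
  ring

theorem D_even_eq_of_two_sines {a b c d : ℝ} {w : ℝ → ℝ}
    (hw : ∀ x, w x = a * sin (c * x) + b * sin (d * x)) (k : ℕ) {x : ℝ}
    (hx : x ∈ Icc (0 : ℝ) 1) :
    D (2 * k) w x
      = (-1) ^ k * (a * c ^ (2 * k) * sin (c * x) + b * d ^ (2 * k) * sin (d * x)) := by
  rw [funext hw, D, iteratedDerivWithin_eq_iteratedDeriv (uniqueDiffOn_Icc zero_lt_one)
    (by fun_prop) hx, iteratedDeriv_even_two_sines]

theorem D_two_eq_of_two_sines {a b c d : ℝ} {w : ℝ → ℝ}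
    (hw : ∀ x, w x = a * sin (c * x) + b * sin (d * x)) {x : ℝ} (hx : x ∈ Icc (0 : ℝ) 1) :
    D 2 w x = -(a * c ^ 2 * sin (c * x) + b * d ^ 2 * sin (d * x)) := by
  simpa using D_even_eq_of_two_sines hw 1 hx

theorem D_four_eq_of_two_sines {a b c d : ℝ} {w : ℝ → ℝ}
    (hw : ∀ x, w x = a * sin (c * x) + b * sin (d * x)) {x : ℝ} (hx : x ∈ Icc (0 : ℝ) 1) :
    D 4 w x = a * c ^ 4 * sin (c * x) + b * d ^ 4 * sin (d * x) := by
  simpa using D_even_eq_of_two_sines hw 2 hx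

/-- Differentiating twice separates the two frequencies. -/
theorem sin_mul_eq_zero_of_two_sines_eq_zero {a b c d : ℝ} (hcd : c ^ 2 ≠ d ^ 2)
    (h : ∀ x ∈ Icc (0 : ℝ) 1, a * sin (c * x) + b * sin (d * x) = 0) {x : ℝ}
    (hx : x ∈ Icc (0 : ℝ) 1) : a * sin (c * x) = 0 := by
  have hD2 : D 2 (fun x => a * sin (c * x) + b * sin (d * x)) x = 0 := by
    rw [D, iteratedDerivWithin_congr h hx, iteratedDerivWithin_fun_const_zero]
  rw [D_two_eq_of_two_sines (fun _ => rfl) hx] at hD2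
  have : (d ^ 2 - c ^ 2) * (a * sin (c * x)) = 0 := by
    linear_combination d ^ 2 * h x hx + hD2
  exact (mul_eq_zero.mp this).resolve_left (sub_ne_zero.mpr hcd.symm)

theorem natCast_mul_pi_sq_ne {m n : ℕ} (hmn : m ≠ n) :
    ((m : ℝ) * π) ^ 2 ≠ ((n : ℝ) * π) ^ 2 := by
  intro h
  rw [sq_eq_sq₀ (by positivity) (by positivity)] at h
  exact hmn (by exact_mod_cast mul_right_cancel₀ pi_ne_zero h)

theorem coeff_eq_zero_of_two_modes_eq_zero {a b : ℝ} {m n : ℕ} (hm : 0 < m) (hmn : m ≠ n)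
    (h : ∀ x ∈ Icc (0 : ℝ) 1, a * sin ((m : ℝ) * π * x) + b * sin ((n : ℝ) * π * x) = 0) :
    a = 0 := by
  have hm' : (1 : ℝ) ≤ m := by exact_mod_cast hm
  have hx : 1 / (2 * (m : ℝ)) ∈ Icc (0 : ℝ) 1 :=
    ⟨by positivity, by rw [div_le_one (by positivity)]; linarith⟩
  have hpeak : (m : ℝ) * π * (1 / (2 * m)) = π / 2 := by field_simp
  simpa only [hpeak, sin_pi_div_two, mul_one] using
    sin_mul_eq_zero_of_two_sines_eq_zero (natCast_mul_pi_sq_ne hmn) h hx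

theorem coeffs_eq_zero_of_two_modes_eq_zero {a b : ℝ} {m n : ℕ} (hm : 0 < m) (hn : 0 < n)
    (hmn : m ≠ n)
    (h : ∀ x ∈ Icc (0 : ℝ) 1, a * sin ((m : ℝ) * π * x) + b * sin ((n : ℝ) * π * x) = 0) :
    a = 0 ∧ b = 0 :=
  ⟨coeff_eq_zero_of_two_modes_eq_zero hm hmn h,
    coeff_eq_zero_of_two_modes_eq_zero hn hmn.symm fun x hx => by rw [add_comm]; exact h x hx⟩

theorem pgd_coeff_eq_kl_coeff_add {ν : ℝ} (h₁ : 1 + ν ≠ 0) (h₂ : 1 - ν ≠ 0)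
    (h₃ : 1 - 2 * ν ≠ 0) :
    (1 - ν) / (12 * (1 + ν) * (1 - 2 * ν))
      = 1 / (12 * (1 - ν ^ 2)) + ν ^ 2 / (12 * (1 - ν ^ 2) * (1 - 2 * ν)) := by
  have h : 1 - ν ^ 2 ≠ 0 := by
    rw [show 1 - ν ^ 2 = (1 + ν) * (1 - ν) by ring]; exact mul_ne_zero h₁ h₂
  rw [div_add_div _ _ (by positivity) (by positivity), div_eq_div_iff (by positivity)
    (by positivity)]
  ring

/-- A two-mode sinusoidal deflection `w(x) = cₘ sin(mπx) + cₙ sin(nπx)` solves the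
Kirchhoff–Love strip equation with load `p = w⁗/(12(1−ν²))`, but does not solve the
PGD limit strip equation with the same load (when `ν ≠ 0`). -/
theorem two_mode_deflection_fails_PGD_equation
    (ν : ℝ) (hν : ν ∈ Set.Ioo (-1 : ℝ) (1/2)) (hν0 : ν ≠ 0)
    (m n : ℕ) (hm : 0 < m) (hn : 0 < n) (hmn : m ≠ n)
    (cm cn : ℝ) (hcm : cm ≠ 0) (hcn : cn ≠ 0)
    (w p : ℝ → ℝ)
    (hw : ∀ x, w x = cm * Real.sin ((m : ℝ) * π * x) + cn * Real.sin ((n : ℝ) * π * x))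
    (hp : ∀ x, p x = (1 / (12 * (1 - ν ^ 2))) * D 4 w x) :
    KLeq ν w p ∧
      ∃ x ∈ Set.Icc (0 : ℝ) 1,
        ((1 - ν) / (12 * (1 + ν) * (1 - 2 * ν))) * D 4 w x
          - (ν ^ 2 / (12 * (1 - ν ^ 2) * (1 - 2 * ν)))
              * (2 * kappa w * D 2 w x - (kappa w) ^ 2 * w x) ≠ p x := by
  obtain ⟨hν₁, hν₂⟩ := hν
  have hB : ν ^ 2 / (12 * (1 - ν ^ 2) * (1 - 2 * ν)) ≠ 0 := by
    have : 0 < 1 - ν ^ 2 := by nlinarith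
    exact div_ne_zero (pow_ne_zero 2 hν0) (by nlinarith)
  refine ⟨fun x _ => (hp x).symm, ?_⟩
  by_contra! hpgd
  set κ := kappa w
  have hres : ∀ x ∈ Icc (0 : ℝ) 1, cm * (((m : ℝ) * π) ^ 2 + κ) ^ 2 * sin ((m : ℝ) * π * x)
      + cn * (((n : ℝ) * π) ^ 2 + κ) ^ 2 * sin ((n : ℝ) * π * x) = 0 := by
    intro x hx
    have h := hpgd x hx
    rw [hp, pgd_coeff_eq_kl_coeff_add (by linarith) (by linarith) (by linarith),
      D_two_eq_of_two_sines hw hx, D_four_eq_of_two_sines hw hx, hw] at h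
    refine (mul_eq_zero.mp ?_).resolve_left hB
    linear_combination h
  obtain ⟨hκm, hκn⟩ := coeffs_eq_zero_of_two_modes_eq_zero hm hn hmn hres
  simp only [mul_eq_zero, hcm, hcn, false_or, pow_eq_zero_iff two_ne_zero] at hκm hκn
  exact natCast_mul_pi_sq_ne hmn (by linarith)
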